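/- arXiv:2509.13076 — 2 statements merged into one kernel-verified Lean document; each statement's English description precedes it below -/
import Mathlib

section
/- Let a<0<b, λ>0, γ≥0, and let c: ℝ → [0,∞) be continuous with ∫_ℝ c = γ. For ε>0 set c_ε(x) = ε⁻¹ c(ε⁻¹ x). Define T_ε on C[a,b] by (T_ε f)(x) = x - a + 2∫_a^x ∫_a^y (λ + c_ε(z)) f(z) dz dy. Then for every ω>0 and all f,g ∈ C[a,b], ‖T_ε f - T_ε g‖_ω ≤ 2(λ/ω² + γ/ω)·‖f-g‖_ω, where ‖h‖_ω := max_{a≤x≤b} e^{-ω(x-a)}|h(x)|. -/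
open MeasureTheory Set intervalIntegral

/-!
With the weight `e(x) = exp (ω (x - a))`, put `M = ‖f - g‖_ω`, so that `|f - g| ≤ M e` on `[a, b]`.
Integrating once against `λ + c_ε ≥ 0` gives at most `M (λ/ω + γ) e(y)`: the `λ`-part because
`∫_a^y e = (e(y) - 1)/ω`, the `c_ε`-part because `e` is increasing and `∫ c_ε = γ`. Integrating
a second time divides by `ω` once more, and multiplying by `e(x)⁻¹` gives the bound.
-/

lemma integral_exp_mul_sub {ω : ℝ} (hω : ω ≠ 0) (a y : ℝ) :
    ∫ z in a..y, Real.exp (ω * (z - a)) = (Real.exp (ω * (y - a)) - 1) / ω := by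
  simp_rw [mul_sub]
  rw [integral_comp_mul_sub Real.exp hω, integral_exp, sub_self, Real.exp_zero, smul_eq_mul,
    inv_mul_eq_div]

lemma integral_exp_mul_sub_le {ω : ℝ} (hω : 0 < ω) (a y : ℝ) :
    ∫ z in a..y, Real.exp (ω * (z - a)) ≤ Real.exp (ω * (y - a)) / ω := by
  rw [integral_exp_mul_sub hω.ne' a y]
  gcongr
  linarith

lemma integral_mul_exp_le_exp_mul_integral {c : ℝ → ℝ} (hc_nonneg : ∀ x, 0 ≤ c x)
    (hc_int : Integrable c) {ω a y : ℝ} (hω : 0 ≤ ω) (hay : a ≤ y) :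
    ∫ z in a..y, c z * Real.exp (ω * (z - a)) ≤ Real.exp (ω * (y - a)) * ∫ x, c x := by
  have hc : IntervalIntegrable c volume a y := hc_int.intervalIntegrable
  calc ∫ z in a..y, c z * Real.exp (ω * (z - a))
      ≤ ∫ z in a..y, Real.exp (ω * (y - a)) * c z := by
        refine integral_mono_on hay (hc.mul_continuousOn (by fun_prop)) (hc.const_mul _)
          fun z hz => ?_
        rw [mul_comm]
        gcongr
        · exact hc_nonneg z
        · exact hz.2
    _ = Real.exp (ω * (y - a)) * ∫ z in a..y, c z := intervalIntegral.integral_const_mul _ _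
    _ ≤ Real.exp (ω * (y - a)) * ∫ x, c x := by
        gcongr
        rw [integral_of_le hay]
        exact setIntegral_le_integral hc_int (Filter.Eventually.of_forall hc_nonneg)

lemma abs_integral_add_mul_le {c d : ℝ → ℝ} {lam M ω a y : ℝ} (hlam : 0 ≤ lam)
    (hc_nonneg : ∀ x, 0 ≤ c x) (hc_int : Integrable c) (hω : 0 < ω) (hay : a ≤ y)
    (hd : ∀ z ∈ Icc a y, |d z| ≤ M * Real.exp (ω * (z - a))) :
    |∫ z in a..y, (lam + c z) * d z| ≤ M * (lam / ω + ∫ x, c x) * Real.exp (ω * (y - a)) := by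
  have hM : 0 ≤ M := by simpa using (abs_nonneg _).trans (hd a ⟨le_rfl, hay⟩)
  have hexp : IntervalIntegrable (fun z => Real.exp (ω * (z - a))) volume a y :=
    Continuous.intervalIntegrable (by fun_prop) a y
  have hcexp : IntervalIntegrable (fun z => c z * Real.exp (ω * (z - a))) volume a y :=
    hc_int.intervalIntegrable.mul_continuousOn (by fun_prop)
  calc |∫ z in a..y, (lam + c z) * d z|
      ≤ ∫ z in a..y, lam * M * Real.exp (ω * (z - a)) + M * (c z * Real.exp (ω * (z - a))) := by
        rw [← Real.norm_eq_abs]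
        refine norm_integral_le_of_norm_le hay (Filter.Eventually.of_forall fun z hz => ?_)
          ((hexp.const_mul _).add (hcexp.const_mul _))
        have hk : 0 ≤ lam + c z := add_nonneg hlam (hc_nonneg z)
        rw [Real.norm_eq_abs, abs_mul, abs_of_nonneg hk]
        calc (lam + c z) * |d z| ≤ (lam + c z) * (M * Real.exp (ω * (z - a))) := by
              gcongr
              exact hd z (Ioc_subset_Icc_self hz)
          _ = _ := by ring
    _ = lam * M * (∫ z in a..y, Real.exp (ω * (z - a)))
          + M * ∫ z in a..y, c z * Real.exp (ω * (z - a)) := by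
        rw [integral_add (hexp.const_mul _) (hcexp.const_mul _),
          intervalIntegral.integral_const_mul, intervalIntegral.integral_const_mul]
    _ ≤ lam * M * (Real.exp (ω * (y - a)) / ω)
          + M * (Real.exp (ω * (y - a)) * ∫ x, c x) := by
        gcongr
        · exact integral_exp_mul_sub_le hω a y
        · exact integral_mul_exp_le_exp_mul_integral hc_nonneg hc_int hω.le hay
    _ = M * (lam / ω + ∫ x, c x) * Real.exp (ω * (y - a)) := by ring

lemma abs_integral_le_of_abs_le_mul_exp {u : ℝ → ℝ} {C ω a x : ℝ} (hω : 0 < ω) (hax : a ≤ x)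
    (hu : ∀ y ∈ Icc a x, |u y| ≤ C * Real.exp (ω * (y - a))) :
    |∫ y in a..x, u y| ≤ C * Real.exp (ω * (x - a)) / ω := by
  have hC : 0 ≤ C := by simpa using (abs_nonneg _).trans (hu a ⟨le_rfl, hax⟩)
  calc |∫ y in a..x, u y| ≤ ∫ y in a..x, C * Real.exp (ω * (y - a)) := by
        rw [← Real.norm_eq_abs]
        exact norm_integral_le_of_norm_le hax
          (Filter.Eventually.of_forall fun y hy => hu y (Ioc_subset_Icc_self hy))
          ((by fun_prop : Continuous fun y => C * Real.exp (ω * (y - a))).intervalIntegrable a x)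
    _ = C * ∫ y in a..x, Real.exp (ω * (y - a)) := intervalIntegral.integral_const_mul _ _
    _ ≤ C * (Real.exp (ω * (x - a)) / ω) := by gcongr; exact integral_exp_mul_sub_le hω a x
    _ = C * Real.exp (ω * (x - a)) / ω := (mul_div_assoc _ _ _).symm

lemma abs_integral_integral_add_mul_le {c d : ℝ → ℝ} {lam M ω a x : ℝ} (hlam : 0 ≤ lam)
    (hc_nonneg : ∀ x, 0 ≤ c x) (hc_int : Integrable c) (hω : 0 < ω) (hax : a ≤ x)
    (hd : ∀ z ∈ Icc a x, |d z| ≤ M * Real.exp (ω * (z - a))) :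
    |∫ y in a..x, ∫ z in a..y, (lam + c z) * d z|
      ≤ M * (lam / ω + ∫ t, c t) * Real.exp (ω * (x - a)) / ω :=
  abs_integral_le_of_abs_le_mul_exp hω hax fun _ hy =>
    abs_integral_add_mul_le hlam hc_nonneg hc_int hω hy.1 fun z hz =>
      hd z ⟨hz.1, hz.2.trans hy.2⟩

lemma integral_integral_sub {u v : ℝ → ℝ} {a x : ℝ} (hu : IntervalIntegrable u volume a x)
    (hv : IntervalIntegrable v volume a x) :
    ∫ y in a..x, ∫ z in a..y, (u z - v z)
      = (∫ y in a..x, ∫ z in a..y, u z) - ∫ y in a..x, ∫ z in a..y, v z := by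
  have primitive : ∀ w : ℝ → ℝ, IntervalIntegrable w volume a x →
      IntervalIntegrable (fun y => ∫ z in a..y, w z) volume a x := fun w hw =>
    (continuousOn_primitive_interval' hw left_mem_uIcc).intervalIntegrable
  rw [← integral_sub (primitive u hu) (primitive v hv)]
  refine integral_congr fun y hy => integral_sub ?_ ?_
  · exact hu.mono_set (uIcc_subset_uIcc left_mem_uIcc hy)
  · exact hv.mono_set (uIcc_subset_uIcc left_mem_uIcc hy)

lemma abs_le_iSup_mul_exp {h : ℝ → ℝ} {ω a b z : ℝ} (hh : ContinuousOn h (Icc a b))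
    (hz : z ∈ Icc a b) :
    |h z| ≤ (⨆ x : Icc a b, Real.exp (-ω * ((x : ℝ) - a)) * |h x|) * Real.exp (ω * (z - a)) := by
  have hbdd : BddAbove (range fun x : Icc a b => Real.exp (-ω * ((x : ℝ) - a)) * |h x|) := by
    have hcont : ContinuousOn (fun x => Real.exp (-ω * (x - a)) * |h x|) (Icc a b) :=
      (Continuous.continuousOn (by fun_prop)).mul hh.abs
    exact (isCompact_range hcont.domRestrict).bddAbove
  calc |h z| = Real.exp (ω * (z - a)) * (Real.exp (-ω * (z - a)) * |h z|) := by
        rw [← mul_assoc, ← Real.exp_add, neg_mul, add_neg_cancel, Real.exp_zero, one_mul]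
    _ ≤ Real.exp (ω * (z - a)) * ⨆ x : Icc a b, Real.exp (-ω * ((x : ℝ) - a)) * |h x| := by
        gcongr
        exact le_ciSup hbdd (⟨z, hz⟩ : Icc a b)
    _ = _ := mul_comm _ _

lemma integral_inv_mul_comp_inv_mul (c : ℝ → ℝ) {eps : ℝ} (heps : 0 < eps) :
    ∫ x, eps⁻¹ * c (eps⁻¹ * x) = ∫ x, c x := by
  rw [MeasureTheory.integral_const_mul, Measure.integral_comp_mul_left, inv_inv,
    abs_of_pos heps, smul_eq_mul, ← mul_assoc, inv_mul_cancel₀ heps.ne', one_mul]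

theorem bielecki_estimate_T_general
    (a b lam gamma eps : ℝ) (hlam : 0 < lam)
    (heps : 0 < eps)
    (c : ℝ → ℝ) (hc_nonneg : ∀ x, 0 ≤ c x)
    (hc_int : Integrable c) (hc_gamma : ∫ x, c x = gamma)
    (ceps : ℝ → ℝ) (hceps : ∀ x, ceps x = eps⁻¹ * c (eps⁻¹ * x))
    (T : (ℝ → ℝ) → (ℝ → ℝ))
    (hT : ∀ f x, T f x =
      x - a + 2 * ∫ y in a..x, ∫ z in a..y, (lam + ceps z) * f z)
    (f g : ℝ → ℝ) (hf : ContinuousOn f (Icc a b)) (hg : ContinuousOn g (Icc a b))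
    (ω : ℝ) (hω : 0 < ω) :
    (⨆ x : Icc a b, Real.exp (-ω * ((x : ℝ) - a)) * |T f x - T g x|)
      ≤ 2 * (lam / ω ^ 2 + gamma / ω) *
        ⨆ x : Icc a b, Real.exp (-ω * ((x : ℝ) - a)) * |f x - g x| := by
  have hceps_eq : ceps = fun x => eps⁻¹ * c (eps⁻¹ * x) := funext hceps
  have hceps_nonneg (x : ℝ) : 0 ≤ ceps x :=
    hceps x ▸ mul_nonneg (inv_nonneg.2 heps.le) (hc_nonneg _)
  have hceps_int : Integrable ceps :=
    hceps_eq ▸ (hc_int.comp_mul_left' (inv_ne_zero heps.ne')).const_mul _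
  have hceps_gamma : ∫ x, ceps x = gamma :=
    hceps_eq ▸ (integral_inv_mul_comp_inv_mul c heps).trans hc_gamma
  set M := ⨆ x : Icc a b, Real.exp (-ω * ((x : ℝ) - a)) * |f x - g x|
  have hM : 0 ≤ M := Real.iSup_nonneg fun _ => by positivity
  have hgamma : 0 ≤ gamma := hc_gamma ▸ integral_nonneg hc_nonneg
  refine Real.iSup_le (fun ⟨x, hx⟩ => ?_) (by positivity)
  have hsub : uIcc a x ⊆ Icc a b := uIcc_subset_Icc (left_mem_Icc.2 (hx.1.trans hx.2)) hx
  have hkernel {h : ℝ → ℝ} (hh : ContinuousOn h (Icc a b)) :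
      IntervalIntegrable (fun z => (lam + ceps z) * h z) volume a x :=
    (intervalIntegrable_const.add hceps_int.intervalIntegrable).mul_continuousOn (hh.mono hsub)
  have hdiff : T f x - T g x = 2 * ∫ y in a..x, ∫ z in a..y, (lam + ceps z) * (f z - g z) := by
    simp_rw [hT, mul_sub, integral_integral_sub (hkernel hf) (hkernel hg)]
    ring
  have hdouble : |∫ y in a..x, ∫ z in a..y, (lam + ceps z) * (f z - g z)|
      ≤ M * (lam / ω + gamma) * Real.exp (ω * (x - a)) / ω :=
    hceps_gamma ▸ abs_integral_integral_add_mul_le hlam.le hceps_nonneg hceps_int hω hx.1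
      fun z hz => abs_le_iSup_mul_exp (hf.sub hg) ⟨hz.1, hz.2.trans hx.2⟩
  calc Real.exp (-ω * (x - a)) * |T f x - T g x|
      = 2 * (Real.exp (-ω * (x - a)) *
          |∫ y in a..x, ∫ z in a..y, (lam + ceps z) * (f z - g z)|) := by
        rw [hdiff, abs_mul, abs_two]
        ring
    _ ≤ 2 * (Real.exp (-ω * (x - a)) *
          (M * (lam / ω + gamma) * Real.exp (ω * (x - a)) / ω)) := by gcongr
    _ = 2 * (lam / ω ^ 2 + gamma / ω) * M := by
        rw [neg_mul, Real.exp_neg]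
        field_simp

/-- Bielecki-type contraction estimate for the operator `T_ε`. -/
theorem bielecki_estimate_T
    (a b lam gamma eps : ℝ) (ha : a < 0) (hb : 0 < b) (hlam : 0 < lam)
    (hgamma : 0 ≤ gamma) (heps : 0 < eps)
    (c : ℝ → ℝ) (hc_cont : Continuous c) (hc_nonneg : ∀ x, 0 ≤ c x)
    (hc_int : Integrable c) (hc_gamma : ∫ x, c x = gamma)
    (ceps : ℝ → ℝ) (hceps : ∀ x, ceps x = eps⁻¹ * c (eps⁻¹ * x))
    (T : (ℝ → ℝ) → (ℝ → ℝ))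
    (hT : ∀ f x, T f x =
      x - a + 2 * ∫ y in a..x, ∫ z in a..y, (lam + ceps z) * f z)
    (f g : ℝ → ℝ) (hf : ContinuousOn f (Icc a b)) (hg : ContinuousOn g (Icc a b))
    (ω : ℝ) (hω : 0 < ω) :
    (⨆ x : Icc a b, Real.exp (-ω * ((x : ℝ) - a)) * |T f x - T g x|)
      ≤ 2 * (lam / ω ^ 2 + gamma / ω) *
        ⨆ x : Icc a b, Real.exp (-ω * ((x : ℝ) - a)) * |f x - g x| :=
  bielecki_estimate_T_general a b lam gamma eps hlam heps c hc_nonneg hc_int hc_gamma ceps hceps T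
    hT f g hf hg ω hω
end

section
/- Let a<0<b, λ>0, γ≥0. The function k defined by k(x) = (1/√(2λ))·sinh(√(2λ)(x-a)) for x ≤ 0 and k(x) = (1/√(2λ))·sinh(√(2λ)(x-a)) - (γ/λ)·sinh(√(2λ)a)·sinh(√(2λ)x) for x ≥ 0 is the unique continuous function on [a,b] satisfying k(x) = x - a + 2λ∫_a^x∫_a^y k(z)dz dy + 2γ k(0)·x·[x ≥ 0] for all x ∈ [a,b], where [·] is the Iverson bracket. -/
/-!
Write `s = √(2λ)` and `x⁺ = max x 0`. The explicit solution is
`k x = s⁻¹ sinh (s (x - a)) - c sinh (s x⁺)` with `c = (γ/λ) sinh (s a)`. It is the second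
derivative of `F x = s⁻³ sinh (s (x - a)) - c s⁻² (sinh (s x⁺) - s x⁺)`, which is `C²`
because `x ↦ φ x⁺` is differentiable whenever `φ' 0 = 0`. Hence
`∫_a^x ∫_a^y k = F x - F a - F' a (x - a)`, and the integral equation becomes an identity
between hyperbolic functions (using `s² = 2λ`).

For uniqueness, the difference `d` of two solutions satisfies `d = 2λ ∫∫ d + 2γ d(0) x⁺`.
Then `|d x| ≤ K ∫_a^x |d|`, and Grönwall's inequality applied to `∫_a^x |d|` forces `d = 0`:
first on `[a, 0]`, where the last term vanishes, which gives `d 0 = 0`, and then on `[a, b]`.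
-/

open Set intervalIntegral Real

noncomputable def iteratedIntegral (a : ℝ) (f : ℝ → ℝ) (x : ℝ) : ℝ :=
  ∫ y in a..x, ∫ z in a..y, f z

theorem mul_ite_nonneg_eq_max {φ : ℝ → ℝ} (hφ : φ 0 = 0) (x : ℝ) :
    φ x * (if 0 ≤ x then 1 else 0) = φ (max x 0) := by
  split_ifs with hx
  · rw [mul_one, max_eq_left hx]
  · rw [mul_zero, max_eq_right (le_of_not_ge hx), hφ]

theorem hasDerivAt_comp_max_zero {φ φ' : ℝ → ℝ} (hφ : ∀ x, HasDerivAt φ (φ' x) x)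
    (h0 : φ' 0 = 0) (x : ℝ) : HasDerivAt (fun y => φ (max y 0)) (φ' (max x 0)) x := by
  rcases lt_trichotomy x 0 with hx | rfl | hx
  · rw [max_eq_right hx.le, h0]
    refine (hasDerivAt_const x (φ 0)).congr_of_eventuallyEq ?_
    filter_upwards [Iio_mem_nhds hx] with y hy
    rw [max_eq_right hy.le]
  · rw [max_self, h0]
    have hleft : HasDerivWithinAt (fun y => φ (max y 0)) 0 (Iic 0) 0 :=
      (hasDerivWithinAt_const 0 _ (φ 0)).congr (fun y hy => by rw [max_eq_right hy]) (by simp)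
    have hright : HasDerivWithinAt (fun y => φ (max y 0)) 0 (Ici 0) 0 :=
      (h0 ▸ (hφ 0).hasDerivWithinAt).congr (fun y hy => by rw [max_eq_left hy]) (by simp)
    simpa using hleft.union hright
  · rw [max_eq_left hx.le]
    refine (hφ x).congr_of_eventuallyEq ?_
    filter_upwards [Ioi_mem_nhds hx] with y hy
    rw [max_eq_left hy.le]

theorem iteratedIntegral_eq_of_hasDerivAt {F F' f : ℝ → ℝ} (hF : ∀ x, HasDerivAt F (F' x) x)
    (hF' : ∀ x, HasDerivAt F' (f x) x) (hf : Continuous f) (a x : ℝ) :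
    iteratedIntegral a f x = F x - F a - F' a * (x - a) := by
  have hF'_cont : Continuous F' := continuous_iff_continuousAt.2 fun y => (hF' y).continuousAt
  have hinner (y : ℝ) : ∫ z in a..y, f z = F' y - F' a :=
    integral_eq_sub_of_hasDerivAt (fun z _ => hF' z) (hf.intervalIntegrable _ _)
  simp only [iteratedIntegral, hinner]
  rw [integral_sub (hF'_cont.intervalIntegrable _ _) intervalIntegrable_const,
    integral_eq_sub_of_hasDerivAt (fun z _ => hF z) (hF'_cont.intervalIntegrable _ _),
    integral_const, smul_eq_mul]
  ring

theorem sub_add_sq_mul_iteratedIntegral_sinh {a s : ℝ} (ha : a ≤ 0) (hs : s ≠ 0) (c x : ℝ) :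
    x - a + s ^ 2 *
        iteratedIntegral a (fun y => s⁻¹ * sinh (s * (y - a)) - c * sinh (s * max y 0)) x =
      s⁻¹ * sinh (s * (x - a)) - c * sinh (s * max x 0) + c * s * max x 0 := by
  have hsinh (y : ℝ) : HasDerivAt (fun t => sinh (s * t) - s * t) (s * (cosh (s * y) - 1)) y :=
    (((hasDerivAt_id' y).const_mul s).sinh.fun_sub
      ((hasDerivAt_id' y).const_mul s)).congr_deriv (by ring)
  have hcosh (y : ℝ) : HasDerivAt (fun t => cosh (s * t)) (s * sinh (s * y)) y :=
    ((hasDerivAt_id' y).const_mul s).cosh.congr_deriv (by ring)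
  have hF (y : ℝ) : HasDerivAt
      (fun t =>
        s⁻¹ ^ 3 * sinh (s * (t - a)) - c * s⁻¹ ^ 2 * (sinh (s * max t 0) - s * max t 0))
      (s⁻¹ ^ 2 * cosh (s * (y - a)) - c * s⁻¹ * (cosh (s * max y 0) - 1)) y := by
    refine (((((hasDerivAt_id' y).sub_const a).const_mul s).sinh.const_mul (s⁻¹ ^ 3)).fun_sub
      ((hasDerivAt_comp_max_zero hsinh (by simp) y).const_mul (c * s⁻¹ ^ 2))).congr_deriv ?_
    field_simp
  have hF' (y : ℝ) : HasDerivAt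
      (fun t => s⁻¹ ^ 2 * cosh (s * (t - a)) - c * s⁻¹ * (cosh (s * max t 0) - 1))
      (s⁻¹ * sinh (s * (y - a)) - c * sinh (s * max y 0)) y := by
    refine (((((hasDerivAt_id' y).sub_const a).const_mul s).cosh.const_mul (s⁻¹ ^ 2)).fun_sub
      (((hasDerivAt_comp_max_zero hcosh (by simp) y).sub_const 1).const_mul
        (c * s⁻¹))).congr_deriv ?_
    field_simp
  rw [iteratedIntegral_eq_of_hasDerivAt hF hF' (by fun_prop), max_eq_right ha]
  simp only [sub_self, mul_zero, sinh_zero, cosh_zero]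
  field_simp
  ring

theorem iteratedIntegral_sub {f g : ℝ → ℝ} {a x : ℝ} (hax : a ≤ x)
    (hf : ContinuousOn f (Icc a x)) (hg : ContinuousOn g (Icc a x)) :
    iteratedIntegral a (f - g) x = iteratedIntegral a f x - iteratedIntegral a g x := by
  rw [← uIcc_of_le hax] at hf hg
  have hprimitive {φ : ℝ → ℝ} (hφ : ContinuousOn φ (uIcc a x)) :
      IntervalIntegrable (fun y => ∫ z in a..y, φ z) MeasureTheory.volume a x :=
    (continuousOn_primitive_interval hφ.integrableOn_Icc).intervalIntegrable
  simp only [iteratedIntegral]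
  rw [← integral_sub (hprimitive hf) (hprimitive hg)]
  refine integral_congr fun y hy => integral_sub ?_ ?_
  · exact (hf.mono (uIcc_subset_uIcc_left hy)).intervalIntegrable
  · exact (hg.mono (uIcc_subset_uIcc_left hy)).intervalIntegrable

theorem abs_iteratedIntegral_le {f : ℝ → ℝ} {a x : ℝ} (hax : a ≤ x)
    (hf : IntervalIntegrable f MeasureTheory.volume a x) :
    |iteratedIntegral a f x| ≤ (x - a) * ∫ t in a..x, |f t| := by
  have hinner : ∀ y ∈ uIoc a x, ‖∫ z in a..y, f z‖ ≤ ∫ t in a..x, |f t| := by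
    intro y hy
    rw [uIoc_of_le hax] at hy
    calc ‖∫ z in a..y, f z‖ ≤ ∫ z in a..y, |f z| := abs_integral_le_integral_abs hy.1.le
      _ ≤ ∫ t in a..x, |f t| :=
        integral_mono_interval le_rfl hy.1.le hy.2 (.of_forall fun _ => abs_nonneg _) hf.abs
  have h := norm_integral_le_of_norm_le_const hinner
  rwa [abs_of_nonneg (sub_nonneg.2 hax), mul_comm] at h

theorem ContinuousOn.hasDerivWithinAt_integral_Ici {f : ℝ → ℝ} {a c t : ℝ}
    (hf : ContinuousOn f (Icc a c)) (ht : t ∈ Ico a c) :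
    HasDerivWithinAt (fun u => ∫ x in a..u, f x) (f t) (Ici t) t := by
  have : Fact (t ∈ Icc a c) := ⟨Ico_subset_Icc_self ht⟩
  refine HasDerivWithinAt.mono_of_mem_nhdsWithin ?_ (Icc_mem_nhdsGE_of_mem ht)
  exact integral_hasDerivWithinAt_right
    (hf.mono (uIcc_of_le ht.1 ▸ Icc_subset_Icc_right ht.2.le)).intervalIntegrable
    (hf.stronglyMeasurableAtFilter_nhdsWithin measurableSet_Icc t) (hf t this.out)

theorem eqOn_zero_of_eq_mul_iteratedIntegral {h : ℝ → ℝ} {a c L : ℝ}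
    (hh : ContinuousOn h (Icc a c)) (heq : ∀ x ∈ Icc a c, h x = L * iteratedIntegral a h x) :
    EqOn h 0 (Icc a c) := by
  rcases lt_or_ge c a with hca | hac
  · simp [Icc_eq_empty_of_lt hca]
  set Φ : ℝ → ℝ := fun x => ∫ t in a..x, |h t|
  have habs : ContinuousOn (fun t => |h t|) (Icc a c) := hh.abs
  have hΦ_cont : ContinuousOn Φ (Icc a c) := by
    have hint := habs.integrableOn_Icc (μ := MeasureTheory.volume)
    rw [← uIcc_of_le hac] at hint ⊢
    exact continuousOn_primitive_interval hint
  have hΦ_nonneg : ∀ x ∈ Icc a c, 0 ≤ Φ x := fun x hx =>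
    integral_nonneg hx.1 fun _ _ => abs_nonneg _
  have hbound : ∀ x ∈ Icc a c, |h x| ≤ |L| * (c - a) * Φ x := by
    intro x hx
    have hint : IntervalIntegrable h MeasureTheory.volume a x :=
      (hh.mono (uIcc_of_le hx.1 ▸ Icc_subset_Icc_right hx.2)).intervalIntegrable
    calc |h x| = |L| * |iteratedIntegral a h x| := by rw [heq x hx, abs_mul]
      _ ≤ |L| * ((x - a) * Φ x) := by gcongr; exact abs_iteratedIntegral_le hx.1 hint
      _ ≤ |L| * ((c - a) * Φ x) := by gcongr; exacts [hΦ_nonneg x hx, hx.2]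
      _ = |L| * (c - a) * Φ x := by ring
  have hΦ_zero : ∀ x ∈ Icc a c, Φ x = 0 := by
    refine eq_zero_of_abs_deriv_le_mul_abs_self_of_eq_zero_right (K := |L| * (c - a))
      hΦ_cont (fun t ht => habs.hasDerivWithinAt_integral_Ici ht) integral_same fun t ht => ?_
    rw [Real.norm_eq_abs, Real.norm_eq_abs, abs_abs,
      abs_of_nonneg (hΦ_nonneg t (Ico_subset_Icc_self ht))]
    exact hbound t (Ico_subset_Icc_self ht)
  intro x hx
  simpa [hΦ_zero x hx] using hbound x hx

theorem eqOn_zero_of_eq_mul_iteratedIntegral_add_mul_max {d : ℝ → ℝ} {a b L C : ℝ}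
    (ha : a ≤ 0) (hb : 0 ≤ b) (hd : ContinuousOn d (Icc a b))
    (heq : ∀ x ∈ Icc a b, d x = L * iteratedIntegral a d x + C * d 0 * max x 0) :
    EqOn d 0 (Icc a b) := by
  have hneg : EqOn d 0 (Icc a 0) :=
    eqOn_zero_of_eq_mul_iteratedIntegral (hd.mono (Icc_subset_Icc_right hb)) fun x hx => by
      simpa [max_eq_right hx.2] using heq x ⟨hx.1, hx.2.trans hb⟩
  have hd0 : d 0 = 0 := hneg ⟨ha, le_rfl⟩
  exact eqOn_zero_of_eq_mul_iteratedIntegral hd fun x hx => by simpa [hd0] using heq x hx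

theorem explicit_k_unique_solution_general
    (a b lam gamma : ℝ) (ha : a < 0) (hb : 0 < b) (hlam : 0 < lam)
    (k : ℝ → ℝ)
    (hk_def : ∀ x, k x =
      (1 / Real.sqrt (2 * lam)) * Real.sinh (Real.sqrt (2 * lam) * (x - a)) -
      (gamma / lam) * Real.sinh (Real.sqrt (2 * lam) * a) *
        Real.sinh (Real.sqrt (2 * lam) * x) * (if 0 ≤ x then 1 else 0)) :
    (ContinuousOn k (Icc a b) ∧
      ∀ x ∈ Icc a b, k x =
        x - a + 2 * lam * (∫ y in a..x, ∫ z in a..y, k z) +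
          2 * gamma * k 0 * x * (if 0 ≤ x then 1 else 0)) ∧
    (∀ g : ℝ → ℝ, ContinuousOn g (Icc a b) →
      (∀ x ∈ Icc a b, g x =
        x - a + 2 * lam * (∫ y in a..x, ∫ z in a..y, g z) +
          2 * gamma * g 0 * x * (if 0 ≤ x then 1 else 0)) →
      EqOn g k (Icc a b)) := by
  set s := √(2 * lam)
  have hs : s ≠ 0 := (Real.sqrt_pos.2 (by positivity)).ne'
  have hlam_eq : lam = s ^ 2 / 2 := by rw [Real.sq_sqrt (by positivity)]; ring
  set c := gamma / lam * sinh (s * a)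
  have hk : k = fun x => s⁻¹ * sinh (s * (x - a)) - c * sinh (s * max x 0) := by
    ext x
    rw [hk_def, mul_assoc _ (sinh _), one_div,
      mul_ite_nonneg_eq_max (φ := fun x => sinh (s * x)) (by simp)]
  have hk_cont : Continuous k := hk ▸ by fun_prop
  have hmax (x : ℝ) : x * (if 0 ≤ x then 1 else 0) = max x 0 :=
    mul_ite_nonneg_eq_max (φ := id) rfl x
  have hsol (x : ℝ) :
      k x = x - a + 2 * lam * iteratedIntegral a k x + 2 * gamma * k 0 * max x 0 := by
    rw [show 2 * lam = s ^ 2 by rw [hlam_eq]; ring, hk,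
      sub_add_sq_mul_iteratedIntegral_sinh ha.le hs]
    simp only [c, zero_sub, mul_neg, sinh_neg, max_self, mul_zero, sinh_zero, hlam_eq]
    field_simp
    ring
  refine ⟨⟨hk_cont.continuousOn, fun x _ => by rw [mul_assoc _ x, hmax]; exact hsol x⟩,
    fun g hg hg_eq => ?_⟩
  have hd := eqOn_zero_of_eq_mul_iteratedIntegral_add_mul_max (L := 2 * lam) (C := 2 * gamma)
    ha.le hb.le (hg.sub hk_cont.continuousOn) fun x hx => ?_
  · exact fun x hx => sub_eq_zero.1 (hd hx)
  rw [iteratedIntegral_sub hx.1 (hg.mono (Icc_subset_Icc_right hx.2)) hk_cont.continuousOn,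
    Pi.sub_apply, Pi.sub_apply, hg_eq x hx, hsol x, mul_assoc _ x, hmax]
  unfold iteratedIntegral
  ring

/-- The explicit function `k` is the unique continuous solution of the limit
integral equation `k(x) = x - a + 2λ∫_a^x∫_a^y k + 2γ k(0) x [x ≥ 0]`. -/
theorem explicit_k_unique_solution
    (a b lam gamma : ℝ) (ha : a < 0) (hb : 0 < b) (hlam : 0 < lam)
    (hgamma : 0 ≤ gamma)
    (k : ℝ → ℝ)
    (hk_def : ∀ x, k x =
      (1 / Real.sqrt (2 * lam)) * Real.sinh (Real.sqrt (2 * lam) * (x - a)) -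
      (gamma / lam) * Real.sinh (Real.sqrt (2 * lam) * a) *
        Real.sinh (Real.sqrt (2 * lam) * x) * (if 0 ≤ x then 1 else 0)) :
    (ContinuousOn k (Icc a b) ∧
      ∀ x ∈ Icc a b, k x =
        x - a + 2 * lam * (∫ y in a..x, ∫ z in a..y, k z) +
          2 * gamma * k 0 * x * (if 0 ≤ x then 1 else 0)) ∧
    (∀ g : ℝ → ℝ, ContinuousOn g (Icc a b) →
      (∀ x ∈ Icc a b, g x =
        x - a + 2 * lam * (∫ y in a..x, ∫ z in a..y, g z) +
          2 * gamma * g 0 * x * (if 0 ≤ x then 1 else 0)) →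
      EqOn g k (Icc a b)) :=
  explicit_k_unique_solution_general a b lam gamma ha hb hlam k hk_def
end
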